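/- Let T be a 2-dimensional real inner product space with complex structure J, R_θ = cos θ · id + sin θ · J, and let A, A' : T → T be symmetric trace-free linear maps. Then the commutator is invariant under rotation: [R_θ∘A, R_θ∘A'] = [A, A']. -/

import Mathlib

/-!
A symmetric trace-free `A` anticommutes with `J`: in the orthonormal basis `e, J e` the
`e`-component of `(A J + J A) e` vanishes because `A` is symmetric and `J` skew, and its
`J e`-component is the trace of `A`; since `A J + J A` commutes with `J`, it vanishes.
Anticommutation gives `A R_θ = R_{-θ} A`, hence `R_θ A R_θ A' = A A'`.
-/

open RealInnerProductSpace

/-- The rotation of angle `θ` associated with the complex structure `J`. -/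
noncomputable def rot {T : Type*} [AddCommGroup T] [Module ℝ T]
    (J : T →ₗ[ℝ] T) (θ : ℝ) : T →ₗ[ℝ] T :=
  Real.cos θ • LinearMap.id + Real.sin θ • J

section Rotation

variable {T : Type*} [AddCommGroup T] [Module ℝ T] {J : T →ₗ[ℝ] T}

theorem rot_comp_rot_neg (hJ2 : ∀ x : T, J (J x) = -x) (θ : ℝ) :
    (rot J θ).comp (rot J (-θ)) = LinearMap.id := by
  ext x
  simp only [rot, LinearMap.comp_apply, LinearMap.add_apply, LinearMap.smul_apply,
    LinearMap.id_apply, map_add, map_smul, hJ2, Real.cos_neg, Real.sin_neg]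
  match_scalars
  · linear_combination Real.cos_sq_add_sin_sq θ
  · ring

theorem comp_rot_of_comp_eq_neg {B : T →ₗ[ℝ] T} (hB : B.comp J = -(J.comp B)) (θ : ℝ) :
    B.comp (rot J θ) = (rot J (-θ)).comp B := by
  simp only [rot, LinearMap.comp_add, LinearMap.add_comp, LinearMap.comp_smul,
    LinearMap.smul_comp, LinearMap.neg_comp, hB, LinearMap.comp_id, LinearMap.id_comp,
    Real.cos_neg, Real.sin_neg, smul_neg, neg_smul]

theorem rot_comp_comp_rot_comp_of_comp_eq_neg (hJ2 : ∀ x : T, J (J x) = -x)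
    {B : T →ₗ[ℝ] T} (hB : B.comp J = -(J.comp B)) (B' : T →ₗ[ℝ] T) (θ : ℝ) :
    ((rot J θ).comp B).comp ((rot J θ).comp B') = B.comp B' := by
  calc ((rot J θ).comp B).comp ((rot J θ).comp B')
      = (rot J θ).comp ((B.comp (rot J θ)).comp B') := by simp only [LinearMap.comp_assoc]
    _ = ((rot J θ).comp (rot J (-θ))).comp (B.comp B') := by
      rw [comp_rot_of_comp_eq_neg hB]; simp only [LinearMap.comp_assoc]
    _ = B.comp B' := by rw [rot_comp_rot_neg hJ2, LinearMap.id_comp]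

end Rotation

section ComplexStructure

variable {T : Type*} [NormedAddCommGroup T] [InnerProductSpace ℝ T] {J : T →ₗ[ℝ] T}

theorem inner_map_left_eq_neg_inner_map_right (hJorth : ∀ x y : T, ⟪J x, J y⟫ = ⟪x, y⟫)
    (hJ2 : ∀ x : T, J (J x) = -x) (x y : T) : ⟪J x, y⟫ = -⟪x, J y⟫ := by
  rw [← hJorth, hJ2, inner_neg_left]

theorem orthonormal_vecCons_map (hJorth : ∀ x y : T, ⟪J x, J y⟫ = ⟪x, y⟫)
    (hJ2 : ∀ x : T, J (J x) = -x) {e : T} (he : ‖e‖ = 1) : Orthonormal ℝ ![e, J e] := by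
  have hJe : ‖J e‖ = 1 := by
    rw [norm_eq_sqrt_real_inner, hJorth, ← norm_eq_sqrt_real_inner, he]
  have hperp : ⟪e, J e⟫ = 0 := by
    have := inner_map_left_eq_neg_inner_map_right hJorth hJ2 e e
    rw [real_inner_comm] at this
    linarith
  rw [orthonormal_iff_ite]
  intro i j
  fin_cases i <;> fin_cases j <;> simp [he, hJe, hperp, real_inner_comm e]

theorem exists_orthonormalBasis_coe_eq_vecCons_map (hdim : Module.finrank ℝ T = 2)
    (hJorth : ∀ x y : T, ⟪J x, J y⟫ = ⟪x, y⟫) (hJ2 : ∀ x : T, J (J x) = -x)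
    {e : T} (he : ‖e‖ = 1) : ∃ b : OrthonormalBasis (Fin 2) ℝ T, ⇑b = ![e, J e] := by
  have hon := orthonormal_vecCons_map hJorth hJ2 he
  let b := basisOfOrthonormalOfCardEqFinrank hon (by rw [Fintype.card_fin, hdim])
  exact ⟨b.toOrthonormalBasis (by simpa [b] using hon), by simp [b]⟩

theorem comp_eq_neg_comp_of_isSymmetric_of_trace_eq_zero (hdim : Module.finrank ℝ T = 2)
    (hJorth : ∀ x y : T, ⟪J x, J y⟫ = ⟪x, y⟫) (hJ2 : ∀ x : T, J (J x) = -x)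
    {A : T →ₗ[ℝ] T} (hA : A.IsSymmetric) (htr : LinearMap.trace ℝ T A = 0) :
    A.comp J = -(J.comp A) := by
  have : Nontrivial T := Module.nontrivial_of_finrank_eq_succ hdim
  obtain ⟨e, he⟩ := exists_norm_eq T zero_le_one
  obtain ⟨b, hb⟩ := exists_orthonormalBasis_coe_eq_vecCons_map hdim hJorth hJ2 he
  rw [eq_neg_iff_add_eq_zero]
  set C := A.comp J + J.comp A
  have hCJ : ∀ x, C (J x) = J (C x) := fun x => by
    simp only [C, LinearMap.add_apply, LinearMap.comp_apply, hJ2, map_neg, map_add]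
    abel
  have hskew := inner_map_left_eq_neg_inner_map_right hJorth hJ2
  have htr' : ⟪e, A e⟫ + ⟪J e, A (J e)⟫ = 0 := by
    simpa [LinearMap.trace_eq_sum_inner A b, Fin.sum_univ_two, hb] using htr
  have hCe : C e = 0 := by
    refine InnerProductSpace.ext_inner_left_basis b.toBasis fun i => ?_
    fin_cases i
    · simp only [C, Fin.zero_eta, OrthonormalBasis.coe_toBasis, hb, Matrix.cons_val_zero,
        LinearMap.add_apply, LinearMap.comp_apply, inner_add_right, inner_zero_right]
      linarith [hA e (J e), hskew e (A e), real_inner_comm (A e) (J e)]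
    · simp only [C, Fin.mk_one, OrthonormalBasis.coe_toBasis, hb, Matrix.cons_val_one,
        Matrix.cons_val_fin_one, LinearMap.add_apply, LinearMap.comp_apply, inner_add_right,
        inner_zero_right, hJorth]
      linarith
  refine b.toBasis.ext fun i => ?_
  fin_cases i
  · simp [hb, hCe]
  · simp [hb, hCJ, hCe]

end ComplexStructure

theorem stmt_7_general {T : Type*} [NormedAddCommGroup T] [InnerProductSpace ℝ T]
    (hdim : Module.finrank ℝ T = 2)
    (J : T →ₗ[ℝ] T) (hJorth : ∀ x y : T, ⟪J x, J y⟫ = ⟪x, y⟫)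
    (hJ2 : ∀ x : T, J (J x) = -x)
    (A A' : T →ₗ[ℝ] T)
    (hAsym : ∀ x y : T, ⟪A x, y⟫ = ⟪x, A y⟫) (hAtr : LinearMap.trace ℝ T A = 0)
    (hA'sym : ∀ x y : T, ⟪A' x, y⟫ = ⟪x, A' y⟫) (hA'tr : LinearMap.trace ℝ T A' = 0) :
    ∀ θ : ℝ,
      ((rot J θ).comp A).comp ((rot J θ).comp A') -
        ((rot J θ).comp A').comp ((rot J θ).comp A) = A.comp A' - A'.comp A := by
  intro θ
  have hA := comp_eq_neg_comp_of_isSymmetric_of_trace_eq_zero hdim hJorth hJ2 hAsym hAtr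
  have hA' := comp_eq_neg_comp_of_isSymmetric_of_trace_eq_zero hdim hJorth hJ2 hA'sym hA'tr
  rw [rot_comp_comp_rot_comp_of_comp_eq_neg hJ2 hA, rot_comp_comp_rot_comp_of_comp_eq_neg hJ2 hA']

theorem stmt_7 {T : Type*} [NormedAddCommGroup T] [InnerProductSpace ℝ T]
    [FiniteDimensional ℝ T] (hdim : Module.finrank ℝ T = 2)
    (J : T →ₗ[ℝ] T) (hJorth : ∀ x y : T, ⟪J x, J y⟫ = ⟪x, y⟫)
    (hJ2 : ∀ x : T, J (J x) = -x)
    (A A' : T →ₗ[ℝ] T)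
    (hAsym : ∀ x y : T, ⟪A x, y⟫ = ⟪x, A y⟫) (hAtr : LinearMap.trace ℝ T A = 0)
    (hA'sym : ∀ x y : T, ⟪A' x, y⟫ = ⟪x, A' y⟫) (hA'tr : LinearMap.trace ℝ T A' = 0) :
    ∀ θ : ℝ,
      ((rot J θ).comp A).comp ((rot J θ).comp A') -
        ((rot J θ).comp A').comp ((rot J θ).comp A) = A.comp A' - A'.comp A :=
  stmt_7_general hdim J hJorth hJ2 A A' hAsym hAtr hA'sym hA'tr
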